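/- Let p, q ∈ (0,1) satisfy p²q = (1−p)³. Then for every x ∈ Σ₂ and every even n, ℙ_μ[x_1^n] = (1−p)^n · (((1−q)(1−p))/(q·p))^{N_{11}(x_1^{n/2})} · (p/(1−p))^{N_1(x_1^n) − 2·N_1(x_1^{n/2})}, where N_1(x_1^m) = #{k ≤ m : x_k = 1} and N_{11}(x_1^{n/2}) = #{k ≤ n/2 : x_k = 1 and x_{2k} = 1}. -/

import Mathlib

/-!
Every letter `u_m` of a word lies on exactly one chain `J(i)`, `i` the odd part of `m`, and
contributes one factor to `ℙ_μ[u]`: `π(u_m)` if `m` is odd and `P(u_{m/2}, u_m)` otherwise.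
As `π(b) = P(0, b)`, this gives `ℙ_μ[x_1^n] = ∏_{m ≤ n} P(y_m, x_m)` with `y_m = x_{m/2}` for
even `m` and `y_m = 0` for odd `m`. When `p²q = (1-p)³`, each transition probability factors as
`P(a, b) = (1-p) c^{ab} r^{b-2a}` with `c = (1-q)(1-p)/(qp)` and `r = p/(1-p)`, and collecting
exponents, `b` counts `N_1(x_1^n)`, `a` counts `N_1(x_1^{n/2})` and `ab` counts `N_{11}(x_1^{n/2})`.
-/

open Filter MeasureTheory Real Set

noncomputable section

/-- `Σ₂ = {0,1}^ℕ`: the space of 0-1 sequences `(x_k)_{k ≥ 1}`, where the entry `x_k`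
(for `k ≥ 1`) is represented by `x (k-1) : Bool`. -/
abbrev Sigma2 : Type := ℕ → Bool

/-- The metric `ρ((x_k),(y_k)) = 2^{-min{n : x_n ≠ y_n}}` (up to the indexing convention
`dist x y = (1/2)^{first index where x,y differ}`). -/
noncomputable instance : MetricSpace Sigma2 :=
  PiNat.metricSpaceOfDiscreteUniformity fun _ => rfl

/-- The digit `x_k ∈ {0,1}` (for `k ≥ 1`) of a sequence, as a real number. -/
def xval (x : Sigma2) (k : ℕ) : ℝ := if x (k - 1) then 1 else 0

/-- `A_θ = {(x_k) ∈ Σ₂ : lim_{n→∞} (1/n) ∑_{k=1}^n x_k x_{2k} = θ}`. -/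
def Aset (θ : ℝ) : Set Sigma2 :=
  {x | Tendsto (fun n : ℕ => (∑ k ∈ Finset.Icc 1 n, xval x k * xval x (2 * k)) / (n : ℝ))
    atTop (nhds θ)}

/-- The cylinder set `[u]` of sequences starting with the finite word `u`
(a list `u` represents the word `u_1 … u_n` with `u_k = u.getD (k-1) false`). -/
def cylinder (u : List Bool) : Set Sigma2 :=
  {x | ∀ i < u.length, x i = u.getD i false}

/-- Initial distribution: `π(0) = 1 - p`, `π(1) = p`. -/
def initProb (p : ℝ) (b : Bool) : ℝ := if b then p else 1 - p

/-- Transition probabilities: `P(0,0) = 1-p`, `P(0,1) = p`, `P(1,0) = q`, `P(1,1) = 1-q`. -/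
def transProb (p q : ℝ) (a b : Bool) : ℝ :=
  if a then (if b then 1 - q else q) else (if b then p else 1 - p)

/-- Markov weight `μ[w] = π(w_1) ∏_{j=1}^{m-1} P(w_j, w_{j+1})` of a finite word `w`. -/
def mweight (p q : ℝ) (w : List Bool) : ℝ :=
  if w = [] then 1
  else initProb p (w.getD 0 false) *
    ∏ j ∈ Finset.range (w.length - 1), transProb p q (w.getD j false) (w.getD (j + 1) false)

/-- The subword `u|_{J(i)} = (u_i, u_{2i}, u_{4i}, …)` of a finite word `u` along the
geometric progression `J(i) = {2^r i : r ≥ 0}`, keeping the indices `2^r i ≤ |u|`. -/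
def subword (u : List Bool) (i : ℕ) : List Bool :=
  ((List.range (u.length + 1)).filter (fun r => 2 ^ r * i ≤ u.length)).map
    (fun r => u.getD (2 ^ r * i - 1) false)

/-- `ℙ_μ[u] = ∏_{i ≤ n, i odd} μ[u|_{J(i)}]` for a finite word `u` of length `n`. -/
def PmuWord (p q : ℝ) (u : List Bool) : ℝ :=
  ∏ i ∈ (Finset.Icc 1 u.length).filter (fun i => Odd i), mweight p q (subword u i)

/-- `Pm` is the (probability) measure `ℙ_μ` on `Σ₂` determined by its values
`ℙ_μ[u] = ∏_{i odd} μ[u|_{J(i)}]` on cylinder sets. -/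
def IsPmu (p q : ℝ) (Pm : Measure Sigma2) : Prop :=
  IsProbabilityMeasure Pm ∧
    ∀ u : List Bool, Pm (cylinder u) = ENNReal.ofReal (PmuWord p q u)

/-- The initial word `x_1^n = x_1 … x_n` of a sequence. -/
def word (x : Sigma2) (n : ℕ) : List Bool := (List.range n).map x

/-- `N_1(x_m^n) = #{k ∈ [m,n] : x_k = 1}`. -/
def N1 (x : Sigma2) (m n : ℕ) : ℕ :=
  ((Finset.Icc m n).filter (fun k => x (k - 1) = true)).card

/-- `N_{ij}(x_1^m) = #{k ≤ m : x_k = i, x_{2k} = j}` (digits `i, j` as booleans). -/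
def Nij (x : Sigma2) (i j : Bool) (m : ℕ) : ℕ :=
  ((Finset.Icc 1 m).filter (fun k => x (k - 1) = i ∧ x (2 * k - 1) = j)).card

/-- `N_{1,odd}(x_1^n) = #{k ≤ n : k odd, x_k = 1}`. -/
def N1odd (x : Sigma2) (n : ℕ) : ℕ :=
  ((Finset.Icc 1 n).filter (fun k => Odd k ∧ x (k - 1) = true)).card

/-- The binary entropy function `H(t) = -t log₂ t - (1-t) log₂ (1-t)`. -/
def Hent (t : ℝ) : ℝ := -(t * Real.logb 2 t) - (1 - t) * Real.logb 2 (1 - t)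

lemma subword_eq_map_range (u : List Bool) {i : ℕ} (hi : 0 < i) :
    subword u i = (List.range (Nat.size (u.length / i))).map
      (fun r => u.getD (2 ^ r * i - 1) false) := by
  have hmem : ∀ r, 2 ^ r * i ≤ u.length ↔ r < Nat.size (u.length / i) := fun r => by
    rw [Nat.lt_size, Nat.le_div_iff_mul_le hi]
  have hsize : Nat.size (u.length / i) ≤ u.length + 1 :=
    (Nat.size_le.2 ((Nat.div_le_self _ _).trans_lt Nat.lt_two_pow_self)).trans (Nat.le_succ _)
  unfold subword
  simp_rw [hmem]
  rw [← List.Ico.zero_bot, List.Ico.filter_lt_of_ge hsize, List.Ico.zero_bot]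

lemma mweight_map_range (p q : ℝ) (f : ℕ → Bool) (L : ℕ) :
    mweight p q ((List.range L).map f) =
      ∏ j ∈ Finset.range L, transProb p q (decide (j ≠ 0) && f (j - 1)) (f j) := by
  have hget : ∀ j < L, ((List.range L).map f).getD j false = f j := fun j hj => by
    simp [List.getD_eq_getElem?_getD, hj]
  cases L with
  | zero => simp [mweight]
  | succ L =>
    rw [mweight, if_neg (by simp), Finset.prod_range_succ', hget 0 L.succ_pos, mul_comm]
    simp only [List.length_map, List.length_range, Nat.add_sub_cancel]
    congr 1
    refine Finset.prod_congr rfl fun j hj => ?_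
    rw [Finset.mem_range] at hj
    rw [hget j (by omega), hget (j + 1) (by omega)]
    simp

lemma two_pow_mul_odd_inj {j j' i i' : ℕ} (hi : Odd i) (hi' : Odd i')
    (h : 2 ^ j * i = 2 ^ j' * i') : j = j' ∧ i = i' := by
  have hval : ∀ {j i : ℕ}, Odd i → (2 ^ j * i).factorization 2 = j := fun {j i} hi => by
    rw [Nat.factorization_mul (by positivity) hi.pos.ne', Finsupp.add_apply,
      Nat.factorization_eq_zero_of_not_dvd hi.not_two_dvd_nat]
    simp [Nat.prime_two.factorization_self]
  obtain rfl : j = j' := (hval hi).symm.trans (h ▸ hval hi')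
  exact ⟨rfl, Nat.eq_of_mul_eq_mul_left (by positivity) h⟩

def localWeight (p q : ℝ) (u : List Bool) (m : ℕ) : ℝ :=
  transProb p q (decide (Even m) && u.getD (m / 2 - 1) false) (u.getD (m - 1) false)

lemma mweight_subword (p q : ℝ) (u : List Bool) {i : ℕ} (hi : Odd i) :
    mweight p q (subword u i) =
      ∏ j ∈ Finset.range (Nat.size (u.length / i)), localWeight p q u (2 ^ j * i) := by
  rw [subword_eq_map_range u hi.pos, mweight_map_range]
  refine Finset.prod_congr rfl fun j _ => ?_
  cases j with
  | zero => simp [localWeight, Nat.not_even_iff_odd.2 hi]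
  | succ j =>
    have hhalf : 2 ^ (j + 1) * i / 2 = 2 ^ j * i := by
      rw [pow_succ, mul_right_comm, Nat.mul_div_cancel _ two_pos]
    rw [localWeight, hhalf]
    simp [pow_succ]

lemma prod_odd_prod_two_pow_mul {M : Type*} [CommMonoid M] (F : ℕ → M) (n : ℕ) :
    ∏ i ∈ (Finset.Icc 1 n).filter Odd, ∏ j ∈ Finset.range (Nat.size (n / i)), F (2 ^ j * i) =
      ∏ m ∈ Finset.Icc 1 n, F m := by
  rw [Finset.prod_sigma']
  refine Finset.prod_bij (fun ji _ => 2 ^ ji.2 * ji.1) ?_ ?_ ?_ fun _ _ => rfl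
  · rintro ⟨i, j⟩ hij
    simp only [Finset.mem_sigma, Finset.mem_filter, Finset.mem_Icc, Finset.mem_range,
      Nat.lt_size] at hij ⊢
    obtain ⟨⟨⟨-, -⟩, hi⟩, hj⟩ := hij
    exact ⟨Nat.mul_pos (Nat.two_pow_pos j) hi.pos, (Nat.le_div_iff_mul_le hi.pos).1 hj⟩
  · rintro ⟨i, j⟩ hij ⟨i', j'⟩ hij' h
    obtain ⟨rfl, rfl⟩ := two_pow_mul_odd_inj (Finset.mem_filter.1 (Finset.mem_sigma.1 hij).1).2
      (Finset.mem_filter.1 (Finset.mem_sigma.1 hij').1).2 h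
    rfl
  · intro m hm
    obtain ⟨j, i, hi, rfl⟩ :=
      Nat.exists_eq_two_pow_mul_odd (Nat.one_le_iff_ne_zero.1 (Finset.mem_Icc.1 hm).1)
    refine ⟨⟨i, j⟩, ?_, rfl⟩
    simp only [Finset.mem_sigma, Finset.mem_filter, Finset.mem_Icc, Finset.mem_range,
      Nat.lt_size, Nat.le_div_iff_mul_le hi.pos] at hm ⊢
    exact ⟨⟨⟨hi.pos, (Nat.le_mul_of_pos_left i (by positivity)).trans hm.2⟩, hi⟩, hm.2⟩

lemma PmuWord_eq_prod_localWeight (p q : ℝ) (u : List Bool) :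
    PmuWord p q u = ∏ m ∈ Finset.Icc 1 u.length, localWeight p q u m := by
  rw [PmuWord, ← prod_odd_prod_two_pow_mul]
  exact Finset.prod_congr rfl fun i hi => mweight_subword p q u (Finset.mem_filter.1 hi).2

lemma PmuWord_word (p q : ℝ) (x : Sigma2) (n : ℕ) :
    PmuWord p q (word x n) = ∏ m ∈ Finset.Icc 1 n,
      transProb p q (decide (Even m) && x (m / 2 - 1)) (x (m - 1)) := by
  have hget : ∀ k < n, (word x n).getD k false = x k := fun k hk => by
    simp [word, List.getD_eq_getElem?_getD, hk]
  rw [PmuWord_eq_prod_localWeight, word, List.length_map, List.length_range, ← word]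
  refine Finset.prod_congr rfl fun m hm => ?_
  rw [Finset.mem_Icc] at hm
  rw [localWeight, hget (m - 1) (by omega), hget (m / 2 - 1) (by omega)]

lemma transProb_eq_ite {p q : ℝ} (hp : p ≠ 0) (hp' : 1 - p ≠ 0) (hpq : p ^ 2 * q = (1 - p) ^ 3)
    (a b : Bool) :
    transProb p q a b = (1 - p) * (if a && b then (1 - q) * (1 - p) / (q * p) else 1) *
      (if b then p / (1 - p) else 1) / (if a then (p / (1 - p)) ^ 2 else 1) := by
  have hq : q = (1 - p) ^ 3 / p ^ 2 := by rw [← hpq]; field_simp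
  subst hq
  cases a <;> cases b <;> simp [transProb] <;> field_simp

lemma prod_transProb_eq_pow {p q : ℝ} (hp : p ≠ 0) (hp' : 1 - p ≠ 0)
    (hpq : p ^ 2 * q = (1 - p) ^ 3) {ι : Type*} (s : Finset ι) (a b : ι → Bool) :
    ∏ m ∈ s, transProb p q (a m) (b m) = (1 - p) ^ s.card *
      ((1 - q) * (1 - p) / (q * p)) ^ (s.filter fun m => a m && b m).card *
      (p / (1 - p)) ^ (s.filter fun m => b m).card /
      ((p / (1 - p)) ^ 2) ^ (s.filter fun m => a m).card := by
  simp_rw [transProb_eq_ite hp hp' hpq, Finset.prod_div_distrib, Finset.prod_mul_distrib,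
    Finset.prod_ite, Finset.prod_const_one, mul_one, Finset.prod_const]

lemma card_filter_even_Icc (P : ℕ → Prop) [DecidablePred P] (n : ℕ) :
    ((Finset.Icc 1 n).filter fun m => Even m ∧ P (m / 2)).card =
      ((Finset.Icc 1 (n / 2)).filter P).card := by
  refine Finset.card_nbij' (· / 2) (2 * ·) ?_ ?_ ?_ ?_
  · intro m hm
    simp only [Finset.coe_filter, Finset.mem_Icc, Set.mem_ofPred_eq] at hm ⊢
    obtain ⟨⟨h1, h2⟩, ⟨k, rfl⟩, hP⟩ := hm
    exact ⟨⟨by omega, by omega⟩, hP⟩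
  · intro k hk
    simp only [Finset.coe_filter, Finset.mem_Icc, Set.mem_ofPred_eq] at hk ⊢
    obtain ⟨⟨h1, h2⟩, hP⟩ := hk
    refine ⟨⟨by omega, by omega⟩, even_two_mul k, ?_⟩
    rwa [Nat.mul_div_cancel_left k two_pos]
  · intro m hm
    simp only [Finset.coe_filter, Finset.mem_Icc, Set.mem_ofPred_eq] at hm
    exact Nat.two_mul_div_two_of_even hm.2.1
  · intro k _
    simp

theorem Pmu_word_formula'_general (p q : ℝ) (hp : p ∈ Set.Ioo (0 : ℝ) 1)
    (hpq : p ^ 2 * q = (1 - p) ^ 3)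
    (Pm : Measure Sigma2) (hPm : IsPmu p q Pm) (x : Sigma2) (n : ℕ) :
    Pm (cylinder (word x n)) = ENNReal.ofReal
      ((1 - p) ^ n * ((1 - q) * (1 - p) / (q * p)) ^ Nij x true true (n / 2) *
        (p / (1 - p)) ^ ((N1 x 1 n : ℤ) - 2 * (N1 x 1 (n / 2) : ℤ))) := by
  have hp0 : p ≠ 0 := hp.1.ne'
  have hp1 : 1 - p ≠ 0 := sub_ne_zero.2 hp.2.ne'
  have h11 : ((Finset.Icc 1 n).filter fun m =>
      (decide (Even m) && x (m / 2 - 1)) && x (m - 1)).card = Nij x true true (n / 2) := by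
    rw [Nij, ← card_filter_even_Icc]
    refine congrArg _ (Finset.filter_congr fun m _ => ?_)
    by_cases hm : Even m
    · simp [hm, Nat.two_mul_div_two_of_even hm]
    · simp [hm]
  have h1 : ((Finset.Icc 1 n).filter fun m =>
      decide (Even m) && x (m / 2 - 1)).card = N1 x 1 (n / 2) := by
    rw [N1, ← card_filter_even_Icc]
    simp
  rw [hPm.2, PmuWord_word, prod_transProb_eq_pow hp0 hp1 hpq, Nat.card_Icc, Nat.add_sub_cancel,
    h11, h1, zpow_sub₀ (div_ne_zero hp0 hp1), zpow_mul, zpow_natCast, zpow_natCast, zpow_ofNat,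
    mul_div_assoc]
  rfl

/-- If `p, q ∈ (0,1)` satisfy `p²q = (1-p)³`, then for every `x ∈ Σ₂` and even `n`,
`ℙ_μ[x_1^n] = (1-p)^n (((1-q)(1-p))/(qp))^{N_11(x_1^{n/2})} (p/(1-p))^{N_1(x_1^n) - 2N_1(x_1^{n/2})}`. -/
theorem Pmu_word_formula' (p q : ℝ) (hp : p ∈ Set.Ioo (0 : ℝ) 1) (hq : q ∈ Set.Ioo (0 : ℝ) 1)
    (hpq : p ^ 2 * q = (1 - p) ^ 3)
    (Pm : Measure Sigma2) (hPm : IsPmu p q Pm) (x : Sigma2) (n : ℕ) (hn : Even n) :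
    Pm (cylinder (word x n)) = ENNReal.ofReal
      ((1 - p) ^ n * ((1 - q) * (1 - p) / (q * p)) ^ Nij x true true (n / 2) *
        (p / (1 - p)) ^ ((N1 x 1 n : ℤ) - 2 * (N1 x 1 (n / 2) : ℤ))) :=
  Pmu_word_formula'_general p q hp hpq Pm hPm x n
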